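/- arXiv:2006.01710 — 4 statements merged into one kernel-verified Lean document; each statement's English description precedes it below -/
import Mathlib

section
/- Let $G$ be a locally compact Polish group acting Borel-measurably on a standard Borel space $X$. Then the set $\mathrm{Free}(X) = \{x \in X : \forall g \in G \setminus \{1_G\},\ g\cdot x \neq x\}$ is a Borel subset of $X$. -/
/-!
For a bounded injective Borel map `e : X → ℝ`, a right Haar measure `μ` and a compact
neighbourhood `U` of `1`, the function `Ψ h x = ∫ g in U, ‖e ((g * h) • x) - e (g • x)‖ ∂μ`
vanishes exactly when `h • x = x`, is Borel in `x`, and is continuous in `h` because right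
translation acts continuously on `L¹(μ)`. By compactness, some element of a compact `K` fixes `x`
iff for every `n` some `d` in a countable dense subset of `K` has `Ψ d x < 1 / (n + 1)`, a Borel
condition on `x`. Finally `G \ {1}` is σ-compact.
-/

open MeasureTheory Filter Topology Set Pointwise

theorem exists_measurable_injective_isBounded_range_real {X : Type*} [MeasurableSpace X]
    [MeasurableSpace.CountablySeparated X] :
    ∃ e : X → ℝ, Measurable e ∧ Function.Injective e ∧ Bornology.IsBounded (range e) := by
  obtain ⟨f, hfm, hfi⟩ := MeasurableSpace.measurable_injection_nat_bool_of_countablySeparated X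
  obtain ⟨e, he⟩ := exists_measurableEmbedding_real (ℕ → Bool)
  refine ⟨Real.arctan ∘ e ∘ f, Real.continuous_arctan.measurable.comp (he.measurable.comp hfm),
    Real.arctan_injective.comp (he.injective.comp hfi), ?_⟩
  exact (Metric.isBounded_Ioo (-(Real.pi / 2)) (Real.pi / 2)).subset
    (Real.range_arctan ▸ range_comp_subset_range _ _)

section
variable {G : Type*} [TopologicalSpace G] [Group G] [IsTopologicalGroup G]
  [MeasurableSpace G] [BorelSpace G]
  {μ : Measure G} [μ.IsMulRightInvariant] [IsLocallyFiniteMeasure μ] [μ.InnerRegularCompactLTTop]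
  {E : Type*} [NormedAddCommGroup E]

theorem tendsto_integral_norm_comp_mul_right_sub {f : G → E} (hf : Integrable f μ) (h₀ : G) :
    Tendsto (fun h => ∫ g, ‖f (g * h) - f (g * h₀)‖ ∂μ) (𝓝 h₀) (𝓝 0) := by
  let R : C(G, C(G, G)) := (ContinuousMap.mk (fun p : G × G => p.2 * p.1) (by fun_prop)).curry
  have hR : ∀ h, MeasurePreserving (R h) μ μ := fun h => measurePreserving_mul_right μ h
  have hcont := (continuous_const (y := hf.toL1 f)).compMeasurePreservingLp R.continuous hR
    ENNReal.one_ne_top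
  have key : ∀ h, dist (Lp.compMeasurePreserving (R h) (hR h) (hf.toL1 f))
      (Lp.compMeasurePreserving (R h₀) (hR h₀) (hf.toL1 f)) =
        ∫ g, ‖f (g * h) - f (g * h₀)‖ ∂μ := by
    intro h
    rw [L1.dist_eq_integral_dist]
    refine integral_congr_ae ?_
    filter_upwards [Lp.coeFn_compMeasurePreserving (hf.toL1 f) (hR h),
      Lp.coeFn_compMeasurePreserving (hf.toL1 f) (hR h₀),
      (hR h).quasiMeasurePreserving.ae_eq_comp hf.coeFn_toL1,
      (hR h₀).quasiMeasurePreserving.ae_eq_comp hf.coeFn_toL1] with g h1 h2 h3 h4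
    simp_all [dist_eq_norm, R]
  simpa [key] using tendsto_iff_dist_tendsto_zero.1 (hcont.tendsto h₀)

theorem continuous_setIntegral_norm_comp_mul_right_sub
    {f : G → E} (hf : Integrable f μ) (U : Set G) :
    Continuous fun h => ∫ g in U, ‖f (g * h) - f g‖ ∂μ := by
  have hint : ∀ h, Integrable (fun g => ‖f (g * h) - f g‖) μ := fun h =>
    ((hf.comp_mul_right h).sub hf).norm
  refine continuous_iff_continuousAt.2 fun h₀ => ?_
  refine tendsto_iff_norm_sub_tendsto_zero.2 <| squeeze_zero (fun _ => norm_nonneg _)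
    (fun h => ?_) (tendsto_integral_norm_comp_mul_right_sub hf h₀)
  rw [← integral_sub (hint h).integrableOn (hint h₀).integrableOn]
  calc ‖∫ g in U, (‖f (g * h) - f g‖ - ‖f (g * h₀) - f g‖) ∂μ‖
      ≤ ∫ g in U, ‖f (g * h) - f (g * h₀)‖ ∂μ :=
        norm_integral_le_of_norm_le
          ((hf.comp_mul_right h).sub (hf.comp_mul_right h₀)).norm.integrableOn
          (ae_of_all _ fun g => by
            simpa using abs_norm_sub_norm_le (f (g * h) - f g) (f (g * h₀) - f g))
    _ ≤ ∫ g, ‖f (g * h) - f (g * h₀)‖ ∂μ :=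
        setIntegral_le_integral ((hf.comp_mul_right h).sub (hf.comp_mul_right h₀)).norm
          (ae_of_all _ fun _ => norm_nonneg _)

theorem continuous_setIntegral_norm_comp_mul_right_sub_of_locallyIntegrable
    [T2Space G] [LocallyCompactSpace G]
    {f : G → E} (hf : LocallyIntegrable f μ) {U : Set G} (hU : IsCompact U) :
    Continuous fun h => ∫ g in U, ‖f (g * h) - f g‖ ∂μ := by
  refine continuous_iff_continuousAt.2 fun h₀ => ?_
  obtain ⟨N, hNc, hN⟩ := exists_compact_mem_nhds h₀
  have hW : IsCompact (U * N ∪ U) := (hU.mul hNc).union hU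
  have hfW : Integrable ((U * N ∪ U).indicator f) μ :=
    (integrable_indicator_iff hW.measurableSet).2 (hf.integrableOn_isCompact hW)
  refine ((continuous_setIntegral_norm_comp_mul_right_sub hfW U).continuousAt).congr ?_
  filter_upwards [hN] with h hh
  refine setIntegral_congr_fun hU.measurableSet fun g hg => ?_
  simp only [indicator_of_mem (mem_union_left _ (mul_mem_mul hg hh)),
    indicator_of_mem (mem_union_right _ hg)]
end

theorem measurableSet_exists_mem_le_zero_of_isCompact {Y X : Type*} [TopologicalSpace Y]
    [SecondCountableTopology Y] [MeasurableSpace X] {K : Set Y} (hK : IsCompact K)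
    {Ψ : Y → X → ℝ} (hcont : ∀ x, Continuous (Ψ · x)) (hmeas : ∀ y, Measurable (Ψ y)) :
    MeasurableSet {x | ∃ y ∈ K, Ψ y x ≤ 0} := by
  obtain ⟨D, hDc, hDd⟩ := TopologicalSpace.exists_countable_dense K
  suffices {x | ∃ y ∈ K, Ψ y x ≤ 0} = ⋂ n : ℕ, ⋃ d ∈ D, {x | Ψ d x < 1 / (n + 1)} by
    rw [this]
    exact .iInter fun n => .biUnion hDc fun d _ => measurableSet_lt (hmeas d) measurable_const
  ext x
  simp only [mem_ofPred_eq, mem_iInter, mem_iUnion, exists_prop]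
  constructor
  · rintro ⟨y, hyK, hy⟩ n
    have hopen : IsOpen {z : K | Ψ z x < 1 / (n + 1)} :=
      isOpen_lt ((hcont x).comp continuous_subtype_val) continuous_const
    obtain ⟨d, hd, hdD⟩ := hDd.inter_open_nonempty _ hopen ⟨⟨y, hyK⟩, by
      change Ψ y x < _
      linarith [Nat.one_div_pos_of_nat (α := ℝ) (n := n)]⟩
    exact ⟨d, hdD, hd⟩
  · intro hx
    choose d hdD hd using hx
    -- a minimiser of `Ψ · x` on `K` lies below every `Ψ (d n) x`, hence below `0`
    obtain ⟨y, hyK, hymin⟩ := hK.exists_isMinOn ⟨_, (d 0).2⟩ (hcont x).continuousOn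
    refine ⟨y, hyK, le_of_forall_pos_lt_add fun ε hε => ?_⟩
    obtain ⟨n, hn⟩ := exists_nat_one_div_lt hε
    linarith [isMinOn_iff.1 hymin _ (d n).2, hd n]

section
variable {G X : Type*} [Group G] [MeasurableSpace G] [MulAction G X]
  (μ : Measure G) (U : Set G) (e : X → ℝ)

noncomputable def displacement (h : G) (x : X) : ℝ :=
  ∫ g in U, ‖e ((g * h) • x) - e (g • x)‖ ∂μ

theorem displacement_nonneg (h : G) (x : X) : 0 ≤ displacement μ U e h x :=
  integral_nonneg fun _ => norm_nonneg _

variable [MeasurableSpace X] [MeasurableMul G] [MeasurableSMul₂ G X] {μ U e}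

theorem measurable_displacement [SFinite μ] (he : Measurable e) (h : G) :
    Measurable (displacement μ U e h) := by
  have hsm : StronglyMeasurable (Function.uncurry fun (x : X) (g : G) =>
      ‖e ((g * h) • x) - e (g • x)‖) :=
    ((he.comp ((measurable_snd.mul_const h).smul measurable_fst)).sub
      (he.comp (measurable_snd.smul measurable_fst))).norm.stronglyMeasurable
  exact hsm.integral_prod_right.measurable

theorem displacement_eq_zero_iff (hU : μ U ≠ 0) (hUf : μ U ≠ ⊤) (he : Measurable e)
    (he_inj : Function.Injective e) (he_bdd : Bornology.IsBounded (range e)) {h : G} {x : X} :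
    displacement μ U e h x = 0 ↔ h • x = x := by
  refine ⟨fun h0 => ?_, fun hfix => ?_⟩
  · obtain ⟨C, hC⟩ := he_bdd.exists_norm_le
    have hint : IntegrableOn (fun g => ‖e ((g * h) • x) - e (g • x)‖) U μ := by
      refine Measure.integrableOn_of_bounded hUf ?_ (M := C + C) (ae_of_all _ fun g => ?_)
      · exact ((he.comp (measurable_smul_const x |>.comp (measurable_mul_const h))).sub
          (he.comp (measurable_smul_const x))).norm.aestronglyMeasurable
      · simpa using (norm_sub_le _ _).trans (add_le_add (hC _ (mem_range_self _))
          (hC _ (mem_range_self _)))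
    have hae := (integral_eq_zero_iff_of_nonneg (fun _ => norm_nonneg _) hint).1 h0
    have : (ae (μ.restrict U)).NeBot := ae_neBot.2 (by simpa using hU)
    obtain ⟨g, hg⟩ := hae.exists
    rw [Pi.zero_apply, norm_eq_zero, sub_eq_zero, mul_smul] at hg
    exact smul_left_cancel g (he_inj hg)
  · simp [displacement, mul_smul, hfix]
end

section
variable {G X : Type*} [TopologicalSpace G] [Group G] [IsTopologicalGroup G]
  [LocallyCompactSpace G] [T2Space G] [SecondCountableTopology G]
  [MeasurableSpace G] [BorelSpace G]
  [MeasurableSpace X] [MeasurableSpace.CountablySeparated X] [MulAction G X] [MeasurableSMul₂ G X]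

theorem measurableSet_exists_smul_eq_of_isCompact {K : Set G} (hK : IsCompact K) :
    MeasurableSet {x : X | ∃ g ∈ K, g • x = x} := by
  obtain ⟨e, he, he_inj, he_bdd⟩ := exists_measurable_injective_isBounded_range_real (X := X)
  obtain ⟨U, hUc, hU1⟩ := exists_compact_mem_nhds (1 : G)
  let μ : Measure G := Measure.haar.inv
  have hU0 : μ U ≠ 0 := (μ.measure_pos_of_mem_nhds hU1).ne'
  have hlocint : ∀ x : X, LocallyIntegrable (fun g : G => e (g • x)) μ := by
    obtain ⟨C, hC⟩ := he_bdd.exists_norm_le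
    exact fun x => (locallyIntegrable_const C).mono
      (he.comp (measurable_smul_const x)).aestronglyMeasurable
      (ae_of_all _ fun g => (hC _ (mem_range_self _)).trans (le_abs_self C))
  have hfixed : ∀ g x, displacement μ U e g x ≤ 0 ↔ g • x = x := fun g x => by
    rw [(displacement_nonneg μ U e g x).ge_iff_eq',
      displacement_eq_zero_iff hU0 hUc.measure_lt_top.ne he he_inj he_bdd]
  have hcont : ∀ x, Continuous (displacement μ U e · x) := fun x =>
    continuous_setIntegral_norm_comp_mul_right_sub_of_locallyIntegrable (hlocint x) hUc
  simpa only [hfixed] using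
    measurableSet_exists_mem_le_zero_of_isCompact hK hcont (measurable_displacement he)

theorem measurableSet_exists_smul_eq_of_isSigmaCompact {S : Set G} (hS : IsSigmaCompact S) :
    MeasurableSet {x : X | ∃ g ∈ S, g • x = x} := by
  obtain ⟨K, hK, rfl⟩ := hS
  have hunion : {x : X | ∃ g ∈ ⋃ n, K n, g • x = x} = ⋃ n, {x : X | ∃ g ∈ K n, g • x = x} := by
    ext x
    simp only [mem_iUnion, mem_ofPred_eq]
    exact ⟨fun ⟨g, ⟨n, hn⟩, hg⟩ => ⟨n, g, hn, hg⟩, fun ⟨n, g, hn, hg⟩ => ⟨g, ⟨n, hn⟩, hg⟩⟩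
  rw [hunion]
  exact .iUnion fun n => measurableSet_exists_smul_eq_of_isCompact (hK n)
end

/-- For a locally compact Polish group `G` acting Borel-measurably on a standard Borel
space `X`, the free part `{x | ∀ g ≠ 1, g • x ≠ x}` is Borel. -/
theorem free_part_is_borel {G X : Type*} [TopologicalSpace G] [PolishSpace G]
    [Group G] [IsTopologicalGroup G] [LocallyCompactSpace G]
    [MeasurableSpace G] [BorelSpace G]
    [MeasurableSpace X] [StandardBorelSpace X]
    (a : G → X → X)
    (hid : ∀ x, a 1 x = x)
    (hmul : ∀ g h x, a (g * h) x = a g (a h x))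
    (hmeas : Measurable fun p : G × X => a p.1 p.2) :
    MeasurableSet {x : X | ∀ g : G, g ≠ 1 → a g x ≠ x} := by
  let : MulAction G X := { smul := a, one_smul := hid, mul_smul := hmul }
  have : MeasurableSMul₂ G X := ⟨hmeas⟩
  have : LocallyCompactSpace ({1}ᶜ : Set G) := isOpen_compl_singleton.locallyCompactSpace
  have hS : IsSigmaCompact ({1}ᶜ : Set G) := isSigmaCompact_iff_sigmaCompactSpace.2 inferInstance
  convert (measurableSet_exists_smul_eq_of_isSigmaCompact (X := X) hS).compl using 1
  ext x
  simp only [mem_ofPred_eq, mem_compl_iff, not_exists, not_and]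
  rfl
end

section
/- Let $G$ be a locally compact Polish group with right-invariant metric $d$, $(X,d_X)$ a compact metric space, $Y \subseteq \mathrm{Lip}(G,X)$ a subflow, $D \subseteq G$ pre-compact and $\epsilon > 0$. Then $Y$ is $(D,\epsilon)$-minimal if and only if there exists a pre-compact open $E \subseteq G$ such that for any $u \in S_E(Y)$, the set $\{(g\cdot u)|_D : g \in D|E\}$ is $\epsilon$-dense in $S_D(Y)$ with respect to the uniform metric $d_D$. -/
open scoped Pointwise

/-- The uniform distance `d_B(u,v) = sup_{h ∈ B} d_X(u h, v h)` on restrictions to `B`. -/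
noncomputable def dB {G X : Type*} [MetricSpace G] [MetricSpace X]
    (B : Set G) (u v : G → X) : ℝ :=
  ⨆ h ∈ B, dist (u h) (v h)

/-- `Y` is `(D,ε)`-minimal: for every `y ∈ Y`, the set of restrictions
`{(g⬝y)|_D : g ∈ G}` is `ε`-dense in `S_D(Y)`. -/
def EpsMin {G X : Type*} [MetricSpace G] [Group G] [MetricSpace X]
    (D : Set G) (ε : ℝ) (Y : Set (G → X)) : Prop :=
  ∀ y ∈ Y, ∀ z ∈ Y, ∃ g : G, dB D (fun h => y (h * g)) z < ε

lemma dB_nonneg {G X : Type*} [MetricSpace G] [MetricSpace X]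
    {B : Set G} {u v : G → X} : 0 ≤ dB B u v :=
  Real.iSup_nonneg fun _ => Real.iSup_nonneg fun _ => dist_nonneg

lemma dB_le {G X : Type*} [MetricSpace G] [MetricSpace X]
    {B : Set G} {u v : G → X} {c : ℝ} (hc : 0 ≤ c)
    (h : ∀ g ∈ B, dist (u g) (v g) ≤ c) : dB B u v ≤ c :=
  Real.iSup_le (fun g => Real.iSup_le (fun hg => h g hg) hc) hc

lemma dist_le_dB {G X : Type*} [MetricSpace G] [MetricSpace X] [CompactSpace X]
    {B : Set G} {u v : G → X} {h : G} (hh : h ∈ B) :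
    dist (u h) (v h) ≤ dB B u v := by
  have hb : BddAbove (Set.range fun g => ⨆ _ : g ∈ B, dist (u g) (v g)) := by
    refine ⟨Metric.diam (Set.univ : Set X), ?_⟩
    rintro x ⟨g, rfl⟩
    exact Real.iSup_le
      (fun _ => Metric.dist_le_diam_of_mem isCompact_univ.isBounded
        (Set.mem_univ _) (Set.mem_univ _)) Metric.diam_nonneg
  calc dist (u h) (v h) = ⨆ _ : h ∈ B, dist (u h) (v h) := (ciSup_pos (f := fun _ : h ∈ B => dist (u h) (v h)) hh).symm
    _ ≤ dB B u v := le_ciSup hb h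

/-- A subflow `Y ⊆ Lip(G,X)` is `(D,ε)`-minimal iff there is a pre-compact open `E ⊆ G`
such that for every `u ∈ S_E(Y)`, the set `{(g⬝u)|_D : g ∈ D|E}` is `ε`-dense in
`S_D(Y)`.  (Here `g ∈ D|E` means `D ⊆ E g⁻¹`, i.e. `h * g ∈ E` for all `h ∈ D`.) -/
theorem epsMin_iff_exists_window {G X : Type*} [MetricSpace G] [Group G]
    [IsTopologicalGroup G] [PolishSpace G] [LocallyCompactSpace G]
    [MetricSpace X] [CompactSpace X]
    (hd : ∀ g h k : G, dist (g * k) (h * k) = dist g h)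
    (Y : Set (G → X)) (hYlip : ∀ f ∈ Y, LipschitzWith 1 f)
    (hYc : IsClosed Y) (hYinv : ∀ (g : G), ∀ f ∈ Y, (fun h => f (h * g)) ∈ Y)
    (D : Set G) (hD : IsCompact (closure D)) (ε : ℝ) (hε : 0 < ε) :
    EpsMin D ε Y ↔
      ∃ E : Set G, IsOpen E ∧ IsCompact (closure E) ∧
        ∀ u ∈ Y, ∀ z ∈ Y, ∃ g : G, (∀ h ∈ D, h * g ∈ E) ∧
          dB D (fun h => u (h * g)) z < ε := by
  constructor
  · intro H
    -- `Y` is compact in the product topology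
    have hYcomp : IsCompact Y := hYc.isCompact
    have hprod : IsCompact (Y ×ˢ Y) := hYcomp.prod hYcomp
    -- `D` is totally bounded
    have hDtb : TotallyBounded D := hD.totallyBounded.subset subset_closure
    -- for every pair in `Y ×ˢ Y` we find a translate `g` and an open neighborhood
    -- on which the same `g` works
    have key : ∀ p : (G → X) × (G → X), p ∈ Y ×ˢ Y →
        ∃ (g : G) (U : Set ((G → X) × (G → X))), IsOpen U ∧ p ∈ U ∧
          ∀ q ∈ U, q ∈ Y ×ˢ Y → dB D (fun h => q.1 (h * g)) q.2 < ε := by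
      rintro ⟨y, z⟩ hp
      obtain ⟨hy, hz⟩ := Set.mem_prod.1 hp
      obtain ⟨g, hg⟩ := H y hy z hz
      set s : ℝ := dB D (fun h => y (h * g)) z with hs
      set δ : ℝ := (ε - s) / 8 with hδdef
      have hδ : 0 < δ := by
        have : s < ε := hg
        simp only [hδdef]; linarith
      obtain ⟨F, hFfin, hFcov⟩ := (Metric.totallyBounded_iff.1 hDtb) δ hδ
      refine ⟨g, {q | ∀ h' ∈ F, dist (q.1 (h' * g)) (y (h' * g)) < δ ∧
        dist (q.2 h') (z h') < δ}, ?_, ?_, ?_⟩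
      · have heq : {q : (G → X) × (G → X) | ∀ h' ∈ F,
            dist (q.1 (h' * g)) (y (h' * g)) < δ ∧ dist (q.2 h') (z h') < δ} =
            ⋂ h' ∈ F, (((fun q : (G → X) × (G → X) => q.1 (h' * g)) ⁻¹'
              Metric.ball (y (h' * g)) δ) ∩
              ((fun q : (G → X) × (G → X) => q.2 h') ⁻¹' Metric.ball (z h') δ)) := by
          ext q
          simp [Metric.mem_ball, dist_comm]
        rw [heq]
        refine hFfin.isOpen_biInter fun h' _ => IsOpen.inter ?_ ?_
        · exact Metric.isOpen_ball.preimage ((continuous_apply (h' * g)).comp continuous_fst)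
        · exact Metric.isOpen_ball.preimage ((continuous_apply h').comp continuous_snd)
      · exact fun h' _ => ⟨by simpa using hδ, by simpa using hδ⟩
      · rintro ⟨u, w⟩ hqU hqY
        obtain ⟨hu, hw⟩ := Set.mem_prod.1 hqY
        have hsnn : 0 ≤ s := dB_nonneg
        have hbound : ∀ h ∈ D, dist (u (h * g)) (w h) ≤ s + 6 * δ := by
          intro h hhD
          obtain ⟨h', hh'F, hhball⟩ := Set.mem_iUnion₂.1 (hFcov hhD)
          have hdist : dist h h' < δ := Metric.mem_ball.1 hhball
          obtain ⟨hU1, hU2⟩ := hqU h' hh'F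
          -- Lipschitz bounds
          have lip : ∀ f ∈ Y, dist (f (h * g)) (f (h' * g)) ≤ δ := by
            intro f hf
            have := (hYlip f hf).dist_le_mul (h * g) (h' * g)
            rw [hd h h' g] at this
            simpa using le_of_lt (lt_of_le_of_lt (by simpa using this) hdist)
          have lip2 : ∀ f ∈ Y, dist (f h) (f h') ≤ δ := fun f hf =>
            le_of_lt (lt_of_le_of_lt (by simpa using (hYlip f hf).dist_le_mul h h') hdist)
          have L1 : dist (u (h * g)) (u (h' * g)) ≤ δ := lip u hu
          have L2 : dist (y (h' * g)) (y (h * g)) ≤ δ := by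
            rw [dist_comm]; exact lip y hy
          have L3 : dist (z h) (z h') ≤ δ := lip2 z hz
          have L4 : dist (w h') (w h) ≤ δ := by
            rw [dist_comm]; exact lip2 w hw
          have Hmid : dist (y (h * g)) (z h) ≤ s :=
            dist_le_dB (u := fun h => y (h * g)) (v := z) hhD
          have T1 : dist (u (h * g)) (w h) ≤
              dist (u (h * g)) (y (h * g)) + dist (y (h * g)) (z h) + dist (z h) (w h) :=
            dist_triangle4 _ _ _ _
          have T2 : dist (u (h * g)) (y (h * g)) ≤
              dist (u (h * g)) (u (h' * g)) + dist (u (h' * g)) (y (h' * g)) +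
                dist (y (h' * g)) (y (h * g)) := dist_triangle4 _ _ _ _
          have T3 : dist (z h) (w h) ≤
              dist (z h) (z h') + dist (z h') (w h') + dist (w h') (w h) :=
            dist_triangle4 _ _ _ _
          have hU2' : dist (z h') (w h') < δ := by rw [dist_comm]; exact hU2
          linarith
        have : dB D (fun h => u (h * g)) w ≤ s + 6 * δ :=
          dB_le (by linarith) hbound
        have : s + 6 * δ < ε := by simp only [hδdef]; linarith
        calc dB D (fun h => u (h * g)) w ≤ s + 6 * δ := by linarith [dB_le (show (0:ℝ) ≤ s + 6*δ by linarith) hbound]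
          _ < ε := this
    choose g U hUopen hpU hUgood using key
    obtain ⟨t, hcov⟩ := hprod.elim_nhds_subcover' (fun p hp => U p hp)
      (fun p hp => (hUopen p hp).mem_nhds (hpU p hp))
    -- an open pre-compact neighborhood of `closure D`
    obtain ⟨K, hKcomp, hKsub⟩ := exists_compact_superset hD
    set V : Set G := interior K with hV
    have hVopen : IsOpen V := isOpen_interior
    have hDV : D ⊆ V := subset_closure.trans hKsub
    refine ⟨⋃ p ∈ t, (fun x => x * g p p.2) '' V, ?_, ?_, ?_⟩
    · exact isOpen_biUnion fun p _ =>
        (Homeomorph.mulRight (g p p.2)).isOpenMap V hVopen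
    · have hCcomp : IsCompact (⋃ p ∈ t, (fun x => x * g p p.2) '' K) :=
        t.finite_toSet.isCompact_biUnion fun p _ =>
          hKcomp.image (continuous_mul_right _)
      refine hCcomp.of_isClosed_subset isClosed_closure
        (closure_minimal ?_ hCcomp.isClosed)
      exact Set.iUnion₂_mono fun p _ => Set.image_mono interior_subset
    · intro u hu z hz
      have hmem : (u, z) ∈ Y ×ˢ Y := Set.mk_mem_prod hu hz
      obtain ⟨p, hpt, hpU'⟩ := Set.mem_iUnion₂.1 (hcov hmem)
      refine ⟨g p p.2, ?_, ?_⟩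
      · intro h hh
        exact Set.mem_biUnion hpt ⟨h, hDV hh, rfl⟩
      · exact hUgood p p.2 (u, z) hpU' hmem
  · rintro ⟨E, _, _, hE⟩ y hy z hz
    obtain ⟨g, _, hg⟩ := hE y hy z hz
    exact ⟨g, hg⟩
end

section
/- Let $G$ be a locally compact Polish group, $(X,d_X)$ a compact metric space, and $Y \subseteq \mathrm{Lip}(G,X)$ a subflow. Then $Y$ is a minimal $G$-flow if and only if $Y$ is $(D,\epsilon)$-minimal for every pre-compact $D \subseteq G$ and every $\epsilon > 0$. -/
open scoped Pointwise

/-!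
Pointwise closeness is closeness on finite sets of coordinates. Right-invariance of the metric
makes every translate `h ↦ y (h * g)` of a 1-Lipschitz `y` again 1-Lipschitz, so closeness to `z`
on a finite `δ`-net of a precompact `D` propagates to closeness within `3δ` on all of `D`.
-/

open Filter Topology

section dB

variable {G X : Type*} [MetricSpace G] [MetricSpace X] {B : Set G} {u v : G → X}

lemma dB_le_s4 {a : ℝ} (ha : 0 ≤ a) (H : ∀ h ∈ B, dist (u h) (v h) ≤ a) : dB B u v ≤ a :=
  Real.iSup_le (fun h => Real.iSup_le (H h) ha) ha

-- Finiteness of `B` supplies the `BddAbove` without which the real `⨆` is the junk value `0`.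
lemma dist_le_dB_of_finite (hB : B.Finite) {h : G} (hh : h ∈ B) :
    dist (u h) (v h) ≤ dB B u v := by
  obtain ⟨M, hM⟩ := (hB.image fun g => dist (u g) (v g)).bddAbove
  have hbdd : BddAbove (Set.range fun g => ⨆ _ : g ∈ B, dist (u g) (v g)) :=
    ⟨max M 0, Set.forall_mem_range.2 fun g =>
      Real.iSup_le (fun hg => (hM ⟨g, hg, rfl⟩).trans (le_max_left _ _)) (le_max_right _ _)⟩
  calc dist (u h) (v h) = ⨆ _ : h ∈ B, dist (u h) (v h) :=
        (ciSup_pos (f := fun _ => dist (u h) (v h)) hh).symm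
    _ ≤ dB B u v := le_ciSup hbdd h

end dB

lemma mem_closure_pi_iff_dist_lt {ι X : Type*} [PseudoMetricSpace X] {S : Set (ι → X)}
    {z : ι → X} :
    z ∈ closure S ↔
      ∀ F : Set ι, F.Finite → ∀ δ > 0, ∃ w ∈ S, ∀ i ∈ F, dist (w i) (z i) < δ := by
  constructor
  · intro hz F hF δ hδ
    obtain ⟨w, hwz, hwS⟩ :=
      mem_closure_iff_nhds.1 hz _ (set_pi_mem_nhds hF fun i _ => Metric.ball_mem_nhds (z i) hδ)
    exact ⟨w, hwS, hwz⟩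
  · intro H
    refine mem_closure_iff_nhds.2 fun U hU => ?_
    obtain ⟨F, hF, t, ht, hFU⟩ := Filter.mem_pi.1 (by rwa [nhds_pi] at hU)
    choose ε hε hεt using fun i => Metric.mem_nhds_iff.1 (ht i)
    have hsmall : ∀ᶠ δ in 𝓝[>] (0 : ℝ), ∀ i ∈ F, δ < ε i :=
      (eventually_all_finite hF).2 fun i _ => nhdsWithin_le_nhds (eventually_lt_nhds (hε i))
    obtain ⟨δ, hδε, hδ⟩ := (hsmall.and self_mem_nhdsWithin).exists
    obtain ⟨w, hwS, hw⟩ := H F hF δ hδ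
    exact ⟨w, hFU fun i hi => hεt i ((hw i hi).trans (hδε i hi)), hwS⟩

lemma LipschitzWith.comp_mul_right {G X : Type*} [PseudoMetricSpace G] [Mul G]
    [PseudoMetricSpace X]
    (hd : ∀ g h k : G, dist (g * k) (h * k) = dist g h) {K : NNReal} {y : G → X}
    (hy : LipschitzWith K y) (g : G) : LipschitzWith K fun h => y (h * g) :=
  LipschitzWith.of_dist_le_mul fun a b => (hy.dist_le_mul _ _).trans_eq (by rw [hd])

lemma dist_lt_of_dist_lt_of_lipschitz {G X : Type*} [PseudoMetricSpace G] [PseudoMetricSpace X]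
    {u v : G → X} (hu : LipschitzWith 1 u) (hv : LipschitzWith 1 v) {h f : G} {δ : ℝ}
    (hhf : dist h f < δ) (hf : dist (u f) (v f) < δ) : dist (u h) (v h) < 3 * δ :=
  calc dist (u h) (v h) ≤ dist (u h) (u f) + dist (u f) (v f) + dist (v f) (v h) :=
        dist_triangle4 _ _ _ _
    _ ≤ dist h f + dist (u f) (v f) + dist f h := by
        gcongr
        · simpa using hu.dist_le_mul h f
        · simpa using hv.dist_le_mul f h
    _ < 3 * δ := by rw [dist_comm f h]; linarith

lemma exists_dB_lt_of_mem_closure_orbit {G X : Type*} [MetricSpace G] [Mul G] [MetricSpace X]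
    (hd : ∀ g h k : G, dist (g * k) (h * k) = dist g h) {y z : G → X}
    (hy : LipschitzWith 1 y) (hz : LipschitzWith 1 z)
    (hyz : z ∈ closure {w : G → X | ∃ g : G, w = fun h => y (h * g)})
    {D : Set G} (hD : TotallyBounded D) {ε : ℝ} (hε : 0 < ε) :
    ∃ g : G, dB D (fun h => y (h * g)) z < ε := by
  obtain ⟨F, hF, hDF⟩ := Metric.totallyBounded_iff.1 hD (ε / 4) (by positivity)
  obtain ⟨_, ⟨g, rfl⟩, hg⟩ := mem_closure_pi_iff_dist_lt.1 hyz F hF (ε / 4) (by positivity)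
  refine ⟨g, (dB_le_s4 (a := 3 * (ε / 4)) (by positivity) fun h hh => ?_).trans_lt (by linarith)⟩
  obtain ⟨f, hfF, hhf⟩ := Set.mem_iUnion₂.1 (hDF hh)
  exact (dist_lt_of_dist_lt_of_lipschitz (hy.comp_mul_right hd g) hz hhf (hg f hfF)).le

theorem minimal_iff_epsMin_general {G X : Type*} [MetricSpace G] [Group G]
    [MetricSpace X]
    (hd : ∀ g h k : G, dist (g * k) (h * k) = dist g h)
    (Y : Set (G → X)) (hYlip : ∀ f ∈ Y, LipschitzWith 1 f) :
    (∀ y ∈ Y, ∀ z ∈ Y, z ∈ closure {w : G → X | ∃ g : G, w = fun h => y (h * g)}) ↔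
      ∀ D : Set G, IsCompact (closure D) → ∀ ε : ℝ, 0 < ε → EpsMin D ε Y := by
  constructor
  · intro hmin D hD ε hε y hy z hz
    exact exists_dB_lt_of_mem_closure_orbit hd (hYlip y hy) (hYlip z hz) (hmin y hy z hz)
      (hD.totallyBounded.subset subset_closure) hε
  · intro hmin y hy z hz
    refine mem_closure_pi_iff_dist_lt.2 fun F hF δ hδ => ?_
    obtain ⟨g, hg⟩ := hmin F hF.isCompact.closure δ hδ y hy z hz
    exact ⟨_, ⟨g, rfl⟩, fun i hi => (dist_le_dB_of_finite hF hi).trans_lt hg⟩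

/-- A subflow `Y ⊆ Lip(G,X)` (with the pointwise topology) is minimal — every orbit is
dense in `Y` — iff `Y` is `(D,ε)`-minimal for every pre-compact `D ⊆ G` and `ε > 0`. -/
theorem minimal_iff_epsMin {G X : Type*} [MetricSpace G] [Group G]
    [IsTopologicalGroup G] [PolishSpace G] [LocallyCompactSpace G]
    [MetricSpace X] [CompactSpace X]
    (hd : ∀ g h k : G, dist (g * k) (h * k) = dist g h)
    (Y : Set (G → X)) (hYlip : ∀ f ∈ Y, LipschitzWith 1 f)
    (hYc : IsClosed Y) (hYinv : ∀ (g : G), ∀ f ∈ Y, (fun h => f (h * g)) ∈ Y) :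
    (∀ y ∈ Y, ∀ z ∈ Y, z ∈ closure {w : G → X | ∃ g : G, w = fun h => y (h * g)}) ↔
      ∀ D : Set G, IsCompact (closure D) → ∀ ε : ℝ, 0 < ε → EpsMin D ε Y :=
  minimal_iff_epsMin_general hd Y hYlip
end

section
/- Let $G$ be a locally compact non-compact Polish group with right-invariant metric $d$ such that $\{g : d(g,1_G) \leq 1\}$ is compact. Then the $G$-flow $\mathrm{Lip}(G,[0,1])^\omega$ is model-universal: for every free measure-preserving Borel $G$-action on a standard Lebesgue space $(X,\mu)$, there is a $G$-invariant Borel probability measure $\nu$ on $\mathrm{Lip}(G,[0,1])^\omega$ such that $(X,\mu)$ is isomorphic as a measure-preserving $G$-system to $(\mathrm{Lip}(G,[0,1])^\omega, \nu)$. -/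
open MeasureTheory

/-- The flow `Lip(G,[0,1])^ω`, realized as sequences of `1`-Lipschitz `[0,1]`-valued
functions on `G`, with the (trace of the) product measurable structure. -/
abbrev LipSeq (G : Type) [MetricSpace G] : Type :=
  {F : ℕ → G → ℝ // ∀ n, LipschitzWith 1 (F n) ∧ ∀ h, F n h ∈ Set.Icc (0 : ℝ) 1}

/-!
Fix an injective Borel map `f : X → [0,1]` and look at each point `x` through its orbit function
`k ↦ f (k • x)` on `G`. Convolving orbit functions (against a left Haar measure) with countably many
Lipschitz bumps built from a dense sequence, and rescaling, gives countably many `1`-Lipschitz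
`[0,1]`-valued functions on `G`; right-invariance of the metric is what makes the convolutions
Lipschitz, and convolution commutes with right translation, so `x` is mapped equivariantly into
`Lip(G,[0,1])^ω`. The map is injective: for `x ≠ y` the difference of the orbit functions vanishes
nowhere, hence has a constant sign on a compact set `K` of positive measure, and a bump equal to `1`
on `K` and supported in an open `U ⊇ K` with `μ (U \ K)` small pairs nontrivially with it. The
push-forward of `μ` is then an invariant measure isomorphic to it.
-/

open Metric Filter Set Function
open scoped ENNReal NNReal

section Bump

variable {α : Type*} [PseudoMetricSpace α]

noncomputable def bump (C : Set α) (n : ℕ) (x : α) : ℝ :=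
  max 0 (min 1 (2 - n * infDist x C))

lemma bump_mem_Icc (C : Set α) (n : ℕ) (x : α) : bump C n x ∈ Icc (0 : ℝ) 1 :=
  ⟨le_max_left _ _, max_le zero_le_one (min_le_left _ _)⟩

lemma lipschitzWith_bump (C : Set α) (n : ℕ) : LipschitzWith n (bump C n) := by
  have haffine : LipschitzWith n fun t : ℝ => 2 - n * t :=
    LipschitzWith.of_dist_le_mul fun s t => by
      rw [Real.dist_eq, Real.dist_eq, show 2 - n * s - (2 - n * t) = n * (t - s) by ring,
        abs_mul, Nat.abs_cast, abs_sub_comm, NNReal.coe_natCast]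
  have h := ((haffine.const_min 1).const_max 0).comp (lipschitz_infDist_pt C)
  rwa [mul_one] at h

lemma bump_eq_one {C : Set α} {n : ℕ} {x : α} (h : n * infDist x C ≤ 1) : bump C n x = 1 := by
  rw [bump, min_eq_left (by linarith), max_eq_right zero_le_one]

lemma mul_infDist_lt_two_of_bump_ne_zero {C : Set α} {n : ℕ} {x : α} (h : bump C n x ≠ 0) :
    n * infDist x C < 2 := by
  by_contra! hx
  exact h (max_eq_left (min_le_of_right_le (by linarith)))

lemma eventually_hasCompactSupport_bump {r : ℝ} (hr : 0 < r)
    (hcpt : ∀ x : α, IsCompact (closedBall x r)) :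
    ∀ᶠ n : ℕ in atTop, ∀ C : Set α, C.Finite → C.Nonempty → HasCompactSupport (bump C n) := by
  filter_upwards [eventually_ge_atTop ⌈2 / r⌉₊] with n hn C hfin hne
  have hn' : 2 ≤ n * r := by
    rw [← div_le_iff₀ hr]; exact (Nat.le_ceil _).trans (by exact_mod_cast hn)
  refine .intro (hfin.isCompact_biUnion fun x _ => hcpt x) fun x hx => ?_
  by_contra h
  have hpos : (0 : ℝ) < n := by
    by_contra! h0
    nlinarith
  obtain ⟨y, hy, hxy⟩ := (infDist_lt_iff hne).1
    ((lt_div_iff₀' hpos).2 (mul_infDist_lt_two_of_bump_ne_zero h))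
  exact hx (mem_biUnion hy (mem_closedBall.2 (hxy.le.trans ((div_le_iff₀' hpos).2 hn'))))

lemma eventually_exists_bump_eqOn {c : ℕ → α} (hc : DenseRange c) {K U : Set α}
    (hK : IsCompact K) (hKne : K.Nonempty) (hU : IsOpen U) (hKU : K ⊆ U) :
    ∀ᶠ n : ℕ in atTop, ∃ F : Finset ℕ, F.Nonempty ∧
      EqOn (bump (c '' F) n) 1 K ∧ EqOn (bump (c '' F) n) 0 Uᶜ := by
  obtain ⟨δ, hδ, hδU⟩ := hK.exists_thickening_subset_open hU hKU
  filter_upwards [eventually_gt_atTop ⌈3 / δ⌉₊] with n hn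
  have hpos : (0 : ℝ) < n := Nat.cast_pos.2 (Nat.zero_lt_of_lt hn)
  have hnδ : 3 / (n : ℝ) < δ := by
    rw [div_lt_iff₀ hpos, mul_comm, ← div_lt_iff₀ hδ]
    exact (Nat.le_ceil _).trans_lt (by exact_mod_cast hn)
  obtain ⟨I, hIK, hIfin, hKI⟩ := hK.elim_finite_subcover_image
    (b := {i | ∃ k ∈ K, dist k (c i) < 1 / n}) (c := fun i => ball (c i) (1 / n))
    (fun _ _ => isOpen_ball) fun k hk => by
      obtain ⟨i, hi⟩ := hc.exists_dist_lt k (one_div_pos.2 hpos)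
      exact mem_biUnion ⟨k, hk, hi⟩ (mem_ball.2 hi)
  have hcover : ∀ k ∈ K, ∃ i ∈ I, dist k (c i) < 1 / n := fun k hk => by
    simpa using hKI hk
  have hF : (c '' I).Nonempty := by
    obtain ⟨k, hk⟩ := hKne
    obtain ⟨i, hi, -⟩ := hcover k hk
    exact ⟨c i, mem_image_of_mem c hi⟩
  refine ⟨hIfin.toFinset, by simpa using hF.of_image, fun k hk => ?_, fun x hx => ?_⟩
  · obtain ⟨i, hi, hki⟩ := hcover k hk
    have : infDist k (c '' I) ≤ dist k (c i) := infDist_le_dist_of_mem (mem_image_of_mem c hi)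
    simp only [Finite.coe_toFinset, Pi.one_apply]
    exact bump_eq_one ((le_div_iff₀' hpos).1 (by linarith))
  · by_contra h
    simp only [Finite.coe_toFinset] at h
    obtain ⟨-, ⟨i, hi, rfl⟩, hxi⟩ :=
      (infDist_lt_iff hF).1 ((lt_div_iff₀' hpos).2 (mul_infDist_lt_two_of_bump_ne_zero h))
    obtain ⟨k, hk, hik⟩ := hIK hi
    refine hx (hδU (mem_thickening_iff.2 ⟨k, hk, ?_⟩))
    calc dist x k ≤ dist x (c i) + dist (c i) k := dist_triangle _ _ _
      _ < 2 / n + 1 / n := add_lt_add hxi (dist_comm k (c i) ▸ hik)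
      _ = 3 / n := by ring
      _ < δ := hnδ

end Bump

section Separation

variable {α : Type*} [MeasurableSpace α] {μ : Measure α}

lemma abs_integral_mul_sub_setIntegral_le {ψ w : α → ℝ} {K U : Set α}
    (hK : MeasurableSet K) (hU : MeasurableSet U) (hμU : μ U ≠ ∞)
    (hψ : Measurable ψ) (hψ01 : ∀ x, ψ x ∈ Icc (0 : ℝ) 1) (hψK : EqOn ψ 1 K) (hψU : EqOn ψ 0 Uᶜ)
    (hw : Measurable w) (hw1 : ∀ x, |w x| ≤ 1) :
    |∫ x, ψ x * w x ∂μ - ∫ x in K, w x ∂μ| ≤ μ.real (U \ K) := by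
  have hKU : K ⊆ U := fun x hxK => by
    by_contra hxU
    simpa using (hψK hxK).symm.trans (hψU hxU)
  have hψ1 : ∀ x, |ψ x| ≤ 1 := fun x => abs_le.2 ⟨by linarith [(hψ01 x).1], (hψ01 x).2⟩
  have hbound : ∀ x, ‖(ψ x - K.indicator 1 x) * w x‖ ≤ (U \ K).indicator 1 x := fun x => by
    by_cases hxK : x ∈ K
    · simp [hxK, hψK hxK]
    by_cases hxU : x ∈ U
    · rw [indicator_of_notMem hxK, indicator_of_mem (Set.mem_sdiff _ |>.2 ⟨hxU, hxK⟩), sub_zero,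
        Pi.one_apply, norm_mul, Real.norm_eq_abs, Real.norm_eq_abs]
      exact mul_le_one₀ (hψ1 x) (abs_nonneg _) (hw1 x)
    · simp [hxK, hxU, hψU hxU]
  have hint_diff : Integrable ((U \ K).indicator (1 : α → ℝ)) μ :=
    (integrable_indicator_iff (hU.diff hK)).2
      (integrableOn_const ((measure_mono sdiff_subset).trans_lt hμU.lt_top).ne)
  have hint_U : Integrable (U.indicator (1 : α → ℝ)) μ :=
    (integrable_indicator_iff hU).2 (integrableOn_const hμU)
  have hint_ψw : Integrable (fun x => ψ x * w x) μ :=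
    hint_U.mono' (hψ.mul hw).aestronglyMeasurable (ae_of_all _ fun x => by
      by_cases hxU : x ∈ U
      · simpa [hxU, abs_mul] using mul_le_one₀ (hψ1 x) (abs_nonneg _) (hw1 x)
      · simp [hxU, hψU hxU])
  have hint_Kw : Integrable (K.indicator w) μ :=
    hint_U.mono' (hw.indicator hK).aestronglyMeasurable (ae_of_all _ fun x => by
      by_cases hxK : x ∈ K
      · simpa [hxK, hKU hxK] using hw1 x
      · simp [hxK, indicator_nonneg])
  calc |∫ x, ψ x * w x ∂μ - ∫ x in K, w x ∂μ|
      = ‖∫ x, (ψ x - K.indicator 1 x) * w x ∂μ‖ := by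
        rw [← integral_indicator hK, ← integral_sub hint_ψw hint_Kw, Real.norm_eq_abs]
        congr 2 with x
        by_cases hxK : x ∈ K <;> simp [hxK, sub_mul]
    _ ≤ ∫ x, (U \ K).indicator 1 x ∂μ := norm_integral_le_of_norm_le hint_diff (ae_of_all _ hbound)
    _ = μ.real (U \ K) := integral_indicator_one (hU.diff hK)

variable [MetricSpace α] [OpensMeasurableSpace α] [μ.InnerRegular] [μ.OuterRegular]
  [IsFiniteMeasureOnCompacts μ] {c : ℕ → α} {w : α → ℝ}

lemma eventually_exists_bump_integral_pos (hc : DenseRange c) (hw : Measurable w)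
    (hw1 : ∀ x, |w x| ≤ 1) (hpos : 0 < μ {x | 0 < w x}) :
    ∀ᶠ n : ℕ in atTop, ∃ F : Finset ℕ, F.Nonempty ∧ 0 < ∫ x, bump (c '' F) n x * w x ∂μ := by
  obtain ⟨K, hKw, hK, hμK⟩ := (measurableSet_lt measurable_const hw).exists_lt_isCompact hpos
  have hε : 0 < ∫ x in K, w x ∂μ := by
    have hint : IntegrableOn w K μ :=
      Measure.integrableOn_of_bounded (μ := μ) hK.measure_lt_top.ne hw.aestronglyMeasurable
        (ae_of_all _ hw1)
    rw [setIntegral_pos_iff_support_of_nonneg_ae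
      (ae_restrict_of_forall_mem hK.measurableSet fun x hx => (hKw hx).le) hint,
      inter_eq_right.2 fun x hx => mem_support.2 (show 0 < w x from hKw hx).ne']
    exact hμK
  have hμK_fin : μ K ≠ ∞ := hK.measure_lt_top.ne
  obtain ⟨U, hKU, hU, hμU⟩ := Set.exists_isOpen_lt_of_lt K _
    (ENNReal.lt_add_right hμK_fin (ENNReal.ofReal_pos.2 hε).ne')
  have hμU_fin : μ U ≠ ∞ := (hμU.trans_le le_top).ne
  have hdiff : μ.real (U \ K) < ∫ x in K, w x ∂μ := by
    have := (ENNReal.toReal_lt_toReal hμU_fin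
      (ENNReal.add_ne_top.2 ⟨hμK_fin, ENNReal.ofReal_ne_top⟩)).2 hμU
    rw [ENNReal.toReal_add hμK_fin ENNReal.ofReal_ne_top,
      ENNReal.toReal_ofReal hε.le] at this
    rw [measureReal_sdiff hKU hK.measurableSet]
    simp only [measureReal_def]
    linarith
  filter_upwards [eventually_exists_bump_eqOn hc hK (nonempty_of_measure_ne_zero hμK.ne') hU hKU]
    with n ⟨F, hF, h1, h0⟩
  have := abs_integral_mul_sub_setIntegral_le hK.measurableSet hU.measurableSet hμU_fin
    (lipschitzWith_bump _ _).continuous.measurable (bump_mem_Icc _ _) h1 h0 hw hw1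
  exact ⟨F, hF, by linarith [neg_abs_le (∫ x, bump (c '' F) n x * w x ∂μ - ∫ x in K, w x ∂μ)]⟩

lemma eventually_exists_bump_integral_ne_zero [NeZero μ] (hc : DenseRange c) (hw : Measurable w)
    (hw1 : ∀ x, |w x| ≤ 1) (hw0 : ∀ x, w x ≠ 0) :
    ∀ᶠ n : ℕ in atTop, ∃ F : Finset ℕ, F.Nonempty ∧ ∫ x, bump (c '' F) n x * w x ∂μ ≠ 0 := by
  have hsign : 0 < μ {x | 0 < w x} ∨ 0 < μ {x | 0 < -w x} := by
    by_contra! h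
    refine NeZero.ne (μ univ) (le_antisymm ?_ bot_le)
    calc μ univ ≤ μ ({x | 0 < w x} ∪ {x | 0 < -w x}) := measure_mono fun x _ => by
          rcases (hw0 x).lt_or_gt with hx | hx
          · exact Or.inr (neg_pos.2 hx)
          · exact Or.inl hx
      _ ≤ μ {x | 0 < w x} + μ {x | 0 < -w x} := measure_union_le _ _
      _ ≤ 0 := by rw [nonpos_iff_eq_zero.1 h.1, nonpos_iff_eq_zero.1 h.2, add_zero]
  rcases hsign with hpos | hneg
  · filter_upwards [eventually_exists_bump_integral_pos hc hw hw1 hpos] with n ⟨F, hF, hF0⟩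
    exact ⟨F, hF, hF0.ne'⟩
  · filter_upwards [eventually_exists_bump_integral_pos hc hw.neg (by simpa using hw1) hneg]
      with n ⟨F, hF, hF0⟩
    simp only [Pi.neg_apply, mul_neg, integral_neg, neg_pos] at hF0
    exact ⟨F, hF, hF0.ne⟩

end Separation

lemma LipschitzWith.abs_sub_le_mul_indicator_tsupport {α : Type*} [PseudoMetricSpace α]
    {ψ : α → ℝ} {L : ℝ≥0} (hψ : LipschitzWith L ψ) (x y : α) :
    |ψ x - ψ y| ≤ L * dist x y * ((tsupport ψ).indicator 1 x + (tsupport ψ).indicator 1 y) := by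
  have hLip : |ψ x - ψ y| ≤ L * dist x y := by simpa [Real.dist_eq] using hψ.dist_le_mul x y
  by_cases hx : x ∈ tsupport ψ
  · refine hLip.trans (le_mul_of_one_le_right (by positivity) ?_)
    rw [indicator_of_mem hx, Pi.one_apply]
    exact le_add_of_nonneg_right (indicator_nonneg (fun _ _ => zero_le_one) y)
  by_cases hy : y ∈ tsupport ψ
  · simpa [hx, hy] using hLip
  · simp [image_eq_zero_of_notMem_tsupport hx, image_eq_zero_of_notMem_tsupport hy, hx, hy]

lemma mul_le_indicator_tsupport {α : Type*} [TopologicalSpace α] {ψ : α → ℝ} {t : ℝ}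
    (hψ1 : ∀ x, ψ x ≤ 1) (ht : t ∈ Icc (0 : ℝ) 1) (x : α) :
    ψ x * t ≤ (tsupport ψ).indicator 1 x := by
  by_cases hx : x ∈ tsupport ψ
  · simpa [hx] using mul_le_one₀ (hψ1 x) ht.1 ht.2
  · simp [image_eq_zero_of_notMem_tsupport hx, hx]

section Convolution

variable {G : Type*} [Group G] [MeasurableSpace G] (μ : Measure G)

noncomputable def groupConv (ψ v : G → ℝ) (h : G) : ℝ :=
  ∫ k, ψ k * v (k⁻¹ * h) ∂μ

lemma groupConv_mul_right (ψ v : G → ℝ) (g h : G) :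
    groupConv μ ψ (fun k => v (k * g)) h = groupConv μ ψ v (h * g) := by
  simp only [groupConv, mul_assoc]

lemma measurable_groupConv [MeasurableMul G] [MeasurableInv G] [SFinite μ] {X : Type*}
    [MeasurableSpace X] {ψ : G → ℝ} {v : X → G → ℝ} (hψ : Measurable ψ)
    (hv : Measurable (uncurry v)) (h : G) : Measurable fun x => groupConv μ ψ (v x) h := by
  have hint : Measurable fun p : X × G => ψ p.2 * v p.1 (p.2⁻¹ * h) :=
    (hψ.comp measurable_snd).mul (hv.comp (measurable_fst.prodMk (measurable_snd.inv.mul_const h)))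
  exact hint.stronglyMeasurable.integral_prod_right'.measurable

lemma groupConv_eq_integral_mul_left [MeasurableMul G] [μ.IsMulLeftInvariant] (ψ v : G → ℝ)
    (h : G) : groupConv μ ψ v h = ∫ k, ψ (h * k) * v k⁻¹ ∂μ := by
  rw [groupConv, ← integral_mul_left_eq_self _ h]
  simp [mul_assoc]

lemma integral_indicator_one_mul_left [MeasurableMul G] [μ.IsMulLeftInvariant] {S : Set G}
    (hS : MeasurableSet S) (h : G) : ∫ k, S.indicator (1 : G → ℝ) (h * k) ∂μ = μ.real S := by
  rw [integral_mul_left_eq_self, integral_indicator_one hS]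

variable [MetricSpace G]

-- `groupConv μ ψ v` takes values in `[0, M]` and is `2 L M`-Lipschitz, `M = μ.real (tsupport ψ)`.
noncomputable def normalizedConv (ψ : G → ℝ) (L : ℝ≥0) (v : G → ℝ) (h : G) : ℝ :=
  (1 + (1 + 2 * L) * μ.real (tsupport ψ))⁻¹ * groupConv μ ψ v h

lemma normalizedConv_mul_right (ψ : G → ℝ) (L : ℝ≥0) (v : G → ℝ) (g h : G) :
    normalizedConv μ ψ L (fun k => v (k * g)) h = normalizedConv μ ψ L v (h * g) := by
  rw [normalizedConv, normalizedConv, groupConv_mul_right]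

lemma measurable_normalizedConv [MeasurableMul G] [MeasurableInv G] [SFinite μ] {X : Type*}
    [MeasurableSpace X] {ψ : G → ℝ} {v : X → G → ℝ} (hψ : Measurable ψ) (L : ℝ≥0)
    (hv : Measurable (uncurry v)) (h : G) :
    Measurable fun x => normalizedConv μ ψ L (v x) h :=
  (measurable_groupConv μ hψ hv h).const_mul _

variable [BorelSpace G] [IsTopologicalGroup G] [μ.IsMulLeftInvariant]
  [IsFiniteMeasureOnCompacts μ] {ψ v : G → ℝ}

lemma integrable_indicator_tsupport_mul_left (hψc : HasCompactSupport ψ) (h : G) :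
    Integrable (fun k => (tsupport ψ).indicator (1 : G → ℝ) (h * k)) μ :=
  ((integrable_indicator_iff (isClosed_tsupport ψ).measurableSet).2
    (integrableOn_const hψc.isCompact.measure_lt_top.ne)).comp_mul_left h

lemma integrable_mul_left_mul_inv (hψ : Measurable ψ) (hψ01 : ∀ x, ψ x ∈ Icc (0 : ℝ) 1)
    (hψc : HasCompactSupport ψ) (hv : Measurable v) (hv01 : ∀ x, v x ∈ Icc (0 : ℝ) 1) (h : G) :
    Integrable (fun k => ψ (h * k) * v k⁻¹) μ :=
  (integrable_indicator_tsupport_mul_left μ hψc h).mono'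
    ((hψ.comp (measurable_const_mul h)).mul (hv.comp measurable_inv)).aestronglyMeasurable
    (ae_of_all _ fun k => by
      rw [Real.norm_of_nonneg (mul_nonneg (hψ01 _).1 (hv01 _).1)]
      exact mul_le_indicator_tsupport (fun x => (hψ01 x).2) (hv01 _) _)

lemma groupConv_mem_Icc (hψ : Measurable ψ) (hψ01 : ∀ x, ψ x ∈ Icc (0 : ℝ) 1)
    (hψc : HasCompactSupport ψ) (hv : Measurable v) (hv01 : ∀ x, v x ∈ Icc (0 : ℝ) 1) (h : G) :
    groupConv μ ψ v h ∈ Icc 0 (μ.real (tsupport ψ)) := by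
  rw [groupConv_eq_integral_mul_left]
  refine ⟨integral_nonneg fun k => mul_nonneg (hψ01 _).1 (hv01 _).1, ?_⟩
  calc ∫ k, ψ (h * k) * v k⁻¹ ∂μ ≤ ∫ k, (tsupport ψ).indicator 1 (h * k) ∂μ :=
        integral_mono (integrable_mul_left_mul_inv μ hψ hψ01 hψc hv hv01 h)
          (integrable_indicator_tsupport_mul_left μ hψc h)
          fun k => mul_le_indicator_tsupport (fun x => (hψ01 x).2) (hv01 _) _
    _ = μ.real (tsupport ψ) :=
        integral_indicator_one_mul_left μ (isClosed_tsupport ψ).measurableSet h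

lemma dist_groupConv_le (hd : ∀ g h k : G, dist (g * k) (h * k) = dist g h) {L : ℝ≥0}
    (hψL : LipschitzWith L ψ) (hψ01 : ∀ x, ψ x ∈ Icc (0 : ℝ) 1) (hψc : HasCompactSupport ψ)
    (hv : Measurable v) (hv01 : ∀ x, v x ∈ Icc (0 : ℝ) 1) (h h' : G) :
    dist (groupConv μ ψ v h) (groupConv μ ψ v h') ≤ 2 * L * μ.real (tsupport ψ) * dist h h' := by
  have hψ := hψL.continuous.measurable
  have hS := integrable_indicator_tsupport_mul_left μ hψc
  rw [groupConv_eq_integral_mul_left, groupConv_eq_integral_mul_left, dist_eq_norm,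
    ← integral_sub (integrable_mul_left_mul_inv μ hψ hψ01 hψc hv hv01 h)
      (integrable_mul_left_mul_inv μ hψ hψ01 hψc hv hv01 h')]
  calc ‖∫ k, (ψ (h * k) * v k⁻¹ - ψ (h' * k) * v k⁻¹) ∂μ‖
      ≤ ∫ k, L * dist h h' * ((tsupport ψ).indicator 1 (h * k)
          + (tsupport ψ).indicator 1 (h' * k)) ∂μ := by
        refine norm_integral_le_of_norm_le (((hS h).add (hS h')).const_mul _)
          (ae_of_all _ fun k => ?_)
        rw [← sub_mul, norm_mul, Real.norm_eq_abs, Real.norm_of_nonneg (hv01 _).1, ← hd h h' k]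
        exact mul_le_of_le_one_right (abs_nonneg _) (hv01 _).2 |>.trans
          (hψL.abs_sub_le_mul_indicator_tsupport _ _)
    _ = 2 * L * μ.real (tsupport ψ) * dist h h' := by
        rw [integral_const_mul, integral_add (hS h) (hS h'),
          integral_indicator_one_mul_left μ (isClosed_tsupport ψ).measurableSet,
          integral_indicator_one_mul_left μ (isClosed_tsupport ψ).measurableSet]
        ring

lemma normalizedConv_mem_Icc (L : ℝ≥0) (hψ : Measurable ψ) (hψ01 : ∀ x, ψ x ∈ Icc (0 : ℝ) 1)
    (hψc : HasCompactSupport ψ) (hv : Measurable v) (hv01 : ∀ x, v x ∈ Icc (0 : ℝ) 1) (h : G) :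
    normalizedConv μ ψ L v h ∈ Icc (0 : ℝ) 1 := by
  obtain ⟨hconv0, hconvM⟩ := groupConv_mem_Icc μ hψ hψ01 hψc hv hv01 h
  have hM : 0 ≤ μ.real (tsupport ψ) := measureReal_nonneg
  have hD : 0 < 1 + (1 + 2 * (L : ℝ)) * μ.real (tsupport ψ) := by positivity
  refine ⟨mul_nonneg (inv_nonneg.2 hD.le) hconv0, ?_⟩
  rw [normalizedConv, inv_mul_le_iff₀ hD]
  nlinarith [L.coe_nonneg]

lemma lipschitzWith_one_normalizedConv (hd : ∀ g h k : G, dist (g * k) (h * k) = dist g h)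
    {L : ℝ≥0} (hψL : LipschitzWith L ψ) (hψ01 : ∀ x, ψ x ∈ Icc (0 : ℝ) 1)
    (hψc : HasCompactSupport ψ) (hv : Measurable v) (hv01 : ∀ x, v x ∈ Icc (0 : ℝ) 1) :
    LipschitzWith 1 (normalizedConv μ ψ L v) := by
  refine LipschitzWith.of_dist_le_mul fun h h' => ?_
  have hconv := dist_groupConv_le μ hd hψL hψ01 hψc hv hv01 h h'
  have hM : 0 ≤ μ.real (tsupport ψ) := measureReal_nonneg
  have hD : 0 < 1 + (1 + 2 * (L : ℝ)) * μ.real (tsupport ψ) := by positivity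
  rw [normalizedConv, normalizedConv, Real.dist_eq, ← mul_sub, abs_mul, abs_of_pos (inv_pos.2 hD),
    ← Real.dist_eq, NNReal.coe_one, one_mul, inv_mul_le_iff₀ hD]
  nlinarith [mul_nonneg hM (dist_nonneg : 0 ≤ dist h h'), (dist_nonneg : 0 ≤ dist h h')]

end Convolution

lemma exists_pos_forall_isCompact_closedBall {G : Type*} [Group G] [MetricSpace G]
    [IsTopologicalGroup G] [LocallyCompactSpace G]
    (hd : ∀ g h k : G, dist (g * k) (h * k) = dist g h) :
    ∃ r > 0, ∀ x : G, IsCompact (closedBall x r) := by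
  obtain ⟨r, hr, hK⟩ := exists_isCompact_closedBall (1 : G)
  refine ⟨r, hr, fun x => (hK.image (continuous_mul_const x)).of_isClosed_subset isClosed_closedBall
    fun g hg => ⟨g * x⁻¹, ?_, inv_mul_cancel_right g x⟩⟩
  rw [mem_closedBall, ← hd _ _ x, inv_mul_cancel_right, one_mul]
  exact hg

lemma exists_ne_normalizedConv_bump {G : Type*} [Group G] [MetricSpace G] [MeasurableSpace G]
    [BorelSpace G] [IsTopologicalGroup G] (μ : Measure G) [μ.IsMulLeftInvariant] [μ.InnerRegular]
    [μ.OuterRegular] [IsFiniteMeasureOnCompacts μ] [NeZero μ] {r : ℝ} (hr : 0 < r)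
    (hr_cpt : ∀ x : G, IsCompact (closedBall x r)) {c : ℕ → G} (hc : DenseRange c)
    {v₁ v₂ : G → ℝ} (hv₁ : Measurable v₁) (hv₁01 : ∀ k, v₁ k ∈ Icc (0 : ℝ) 1)
    (hv₂ : Measurable v₂) (hv₂01 : ∀ k, v₂ k ∈ Icc (0 : ℝ) 1) (hne : ∀ k, v₁ k ≠ v₂ k) :
    ∃ F : Finset ℕ, ∃ n : ℕ, HasCompactSupport (bump (c '' F) n) ∧
      normalizedConv μ (bump (c '' F) n) n v₁ 1 ≠ normalizedConv μ (bump (c '' F) n) n v₂ 1 := by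
  set w : G → ℝ := fun k => v₁ k⁻¹ - v₂ k⁻¹
  have hw : Measurable w := (hv₁.comp measurable_inv).sub (hv₂.comp measurable_inv)
  have hw1 : ∀ k, |w k| ≤ 1 := fun k => abs_sub_le_iff.2
    ⟨by linarith [(hv₁01 k⁻¹).2, (hv₂01 k⁻¹).1], by linarith [(hv₁01 k⁻¹).1, (hv₂01 k⁻¹).2]⟩
  have hw0 : ∀ k, w k ≠ 0 := fun k => sub_ne_zero.2 (hne k⁻¹)
  obtain ⟨n, ⟨F, hF, hint⟩, hcpt⟩ :=
    ((eventually_exists_bump_integral_ne_zero (μ := μ) hc hw hw1 hw0).and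
      (eventually_hasCompactSupport_bump hr hr_cpt)).exists
  set ψ := bump (c '' F) n
  have hψc : HasCompactSupport ψ := hcpt _ (F.finite_toSet.image c) (hF.to_set.image c)
  have hψ := (lipschitzWith_bump (c '' F) n).continuous.measurable
  have hconv : ∀ v : G → ℝ, Measurable v → (∀ k, v k ∈ Icc (0 : ℝ) 1) →
      Integrable (fun k => ψ k * v k⁻¹) μ ∧ groupConv μ ψ v 1 = ∫ k, ψ k * v k⁻¹ ∂μ :=
    fun v hv hv01 =>
      ⟨by simpa using integrable_mul_left_mul_inv μ hψ (bump_mem_Icc _ _) hψc hv hv01 1,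
        by simpa using groupConv_eq_integral_mul_left μ ψ v 1⟩
  obtain ⟨hint₁, hconv₁⟩ := hconv v₁ hv₁ hv₁01
  obtain ⟨hint₂, hconv₂⟩ := hconv v₂ hv₂ hv₂01
  refine ⟨F, n, hψc, fun heq => ?_⟩
  rw [normalizedConv, normalizedConv, hconv₁, hconv₂, mul_right_inj' (inv_ne_zero ?_),
    ← sub_eq_zero, ← integral_sub hint₁ hint₂] at heq
  · exact hint (by simpa only [w, mul_sub] using heq)
  · positivity

lemma exists_measurable_injective_Icc (X : Type*) [MeasurableSpace X] [StandardBorelSpace X] :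
    ∃ f : X → ℝ, Measurable f ∧ Injective f ∧ ∀ x, f x ∈ Icc (0 : ℝ) 1 := by
  obtain ⟨e, he⟩ := exists_measurableEmbedding_real X
  exact ⟨Real.sigmoid ∘ e, continuous_sigmoid.measurable.comp he.measurable,
    Real.sigmoid_injective.comp he.injective,
    fun x => ⟨Real.sigmoid_nonneg _, Real.sigmoid_le_one _⟩⟩

lemma LipSeq.measurable_of_val_eq_shift {G : Type} [MetricSpace G] [Mul G]
    {m : LipSeq G → LipSeq G} (g : G) (hm : ∀ F, (m F).1 = fun n h => F.1 n (h * g)) :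
    Measurable m := by
  have hval : Measurable fun F => (m F).1 := by
    simp_rw [hm]
    exact measurable_pi_lambda _ fun n => measurable_pi_lambda _ fun h =>
      (measurable_pi_apply (h * g)).comp ((measurable_pi_apply n).comp measurable_subtype_coe)
  exact hval.subtype_mk

lemma exists_lipSeq_embedding {G : Type} [MetricSpace G] [Group G] [IsTopologicalGroup G]
    [PolishSpace G] [LocallyCompactSpace G] [MeasurableSpace G] [BorelSpace G]
    (hd : ∀ g h k : G, dist (g * k) (h * k) = dist g h) {X : Type*} [MeasurableSpace X]
    [StandardBorelSpace X] {a : G → X → X} (ha_inj : ∀ g, Injective (a g))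
    (hmul : ∀ g h x, a (g * h) x = a g (a h x)) (hameas : Measurable fun p : G × X => a p.1 p.2) :
    ∃ φ : X → LipSeq G, Measurable φ ∧ Injective φ ∧
      ∀ g x, (φ (a g x)).1 = fun n h => (φ x).1 n (h * g) := by
  obtain ⟨r, hr, hr_cpt⟩ := exists_pos_forall_isCompact_closedBall hd
  obtain ⟨c, hc⟩ := TopologicalSpace.exists_dense_seq G
  obtain ⟨f, hf, hf_inj, hf01⟩ := exists_measurable_injective_Icc X
  let J := {p : Finset ℕ × ℕ // HasCompactSupport (bump (c '' p.1) p.2)}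
  have : Nonempty J := by
    obtain ⟨n, hn⟩ := (eventually_hasCompactSupport_bump hr hr_cpt).exists
    exact ⟨⟨({0}, n), hn _ (toFinite _) (by simp)⟩⟩
  obtain ⟨e, he⟩ := exists_surjective_nat J
  let ψ (n : ℕ) : G → ℝ := bump (c '' (e n).1.1) (e n).1.2
  have horbit : ∀ x, Measurable (fun k => f (a k x)) :=
    fun x => hf.comp (hameas.comp (measurable_id.prodMk measurable_const))
  let φ (x : X) : LipSeq G :=
    ⟨fun n => normalizedConv Measure.haar (ψ n) (e n).1.2 fun k => f (a k x),
      fun n => ⟨lipschitzWith_one_normalizedConv _ hd (lipschitzWith_bump _ _) (bump_mem_Icc _ _)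
        (e n).2 (horbit x) (fun k => hf01 _),
        normalizedConv_mem_Icc _ _ (lipschitzWith_bump _ _).continuous.measurable
          (bump_mem_Icc _ _) (e n).2 (horbit x) (fun k => hf01 _)⟩⟩
  refine ⟨φ, ?_, fun x y hxy => ?_, fun g x => ?_⟩
  · exact Measurable.subtype_mk <| measurable_pi_lambda _ fun n =>
      measurable_pi_lambda _ fun h => measurable_normalizedConv _ (v := fun x k => f (a k x))
        (lipschitzWith_bump _ _).continuous.measurable _ (hf.comp (hameas.comp measurable_swap)) h
  · by_contra hne
    obtain ⟨F, n, hFn, hne'⟩ := exists_ne_normalizedConv_bump Measure.haar hr hr_cpt hc (horbit x)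
      (fun k => hf01 _) (horbit y) (fun k => hf01 _) fun k => hf_inj.ne ((ha_inj k).ne hne)
    obtain ⟨m, hm⟩ := he ⟨(F, n), hFn⟩
    have hxy_m := congr_fun (congr_fun (congr_arg Subtype.val hxy) m) 1
    simp only [φ, ψ, hm] at hxy_m
    exact hne' hxy_m
  · ext n h
    simp only [φ, ← normalizedConv_mul_right, hmul]

theorem lipSeq_model_universal_general {G : Type} [MetricSpace G] [Group G] [IsTopologicalGroup G]
    [PolishSpace G] [LocallyCompactSpace G]
    [MeasurableSpace G] [BorelSpace G]
    (hd : ∀ g h k : G, dist (g * k) (h * k) = dist g h)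
    (X : Type) [MeasurableSpace X] [StandardBorelSpace X]
    (μ : Measure X) [IsProbabilityMeasure μ]
    (a : G → X → X) (hid : ∀ x, a 1 x = x)
    (hmul : ∀ g h x, a (g * h) x = a g (a h x))
    (hameas : Measurable fun p : G × X => a p.1 p.2)
    (hpres : ∀ g, MeasurePreserving (a g) μ μ) :
    ∃ ν : Measure (LipSeq G),
      IsProbabilityMeasure ν ∧
      (∀ (g : G) (m : LipSeq G → LipSeq G),
        (∀ F, (m F).1 = fun n h => F.1 n (h * g)) → MeasurePreserving m ν ν) ∧
      ∃ (X' : Set X) (φ : X → LipSeq G),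
        MeasurableSet X' ∧ μ X' = 1 ∧ (∀ g : G, ∀ x ∈ X', a g x ∈ X') ∧
        Measurable φ ∧ Set.InjOn φ X' ∧
        (∀ g : G, ∀ x ∈ X', (φ (a g x)).1 = fun n h => (φ x).1 n (h * g)) ∧
        Measure.map φ μ = ν := by
  obtain ⟨φ, hφ, hinj, hequiv⟩ := exists_lipSeq_embedding hd
    (fun g x y hxy => by simpa [← hmul, hid] using congr_arg (a g⁻¹) hxy) hmul hameas
  refine ⟨μ.map φ, Measure.isProbabilityMeasure_map hφ.aemeasurable, fun g m hm => ?_, univ, φ,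
    .univ, measure_univ, fun _ _ _ => trivial, hφ, hinj.injOn, fun g x _ => hequiv g x, rfl⟩
  exact (hφ.measurePreserving μ).of_semiconj (hpres g)
    (fun x => Subtype.ext ((hequiv g x).trans (hm (φ x)).symm))
    (LipSeq.measurable_of_val_eq_shift g hm)

/-- `Lip(G,[0,1])^ω` (with the shift action `(g ⬝ F) n h = F n (h g)`) is
model-universal: every free measure-preserving Borel `G`-system `(X,μ)` on a standard
Lebesgue space is isomorphic to `(Lip(G,[0,1])^ω, ν)` for some invariant probability
measure `ν`. -/
theorem lipSeq_model_universal {G : Type} [MetricSpace G] [Group G] [IsTopologicalGroup G]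
    [PolishSpace G] [LocallyCompactSpace G] [NoncompactSpace G]
    [MeasurableSpace G] [BorelSpace G]
    (hd : ∀ g h k : G, dist (g * k) (h * k) = dist g h)
    (hball : IsCompact {g : G | dist g 1 ≤ 1})
    (X : Type) [MeasurableSpace X] [StandardBorelSpace X]
    (μ : Measure X) [IsProbabilityMeasure μ]
    (a : G → X → X) (hid : ∀ x, a 1 x = x)
    (hmul : ∀ g h x, a (g * h) x = a g (a h x))
    (hameas : Measurable fun p : G × X => a p.1 p.2)
    (hpres : ∀ g, MeasurePreserving (a g) μ μ)
    (hfree : μ {x | ∀ g : G, g ≠ 1 → a g x ≠ x} = 1) :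
    ∃ ν : Measure (LipSeq G),
      IsProbabilityMeasure ν ∧
      (∀ (g : G) (m : LipSeq G → LipSeq G),
        (∀ F, (m F).1 = fun n h => F.1 n (h * g)) → MeasurePreserving m ν ν) ∧
      ∃ (X' : Set X) (φ : X → LipSeq G),
        MeasurableSet X' ∧ μ X' = 1 ∧ (∀ g : G, ∀ x ∈ X', a g x ∈ X') ∧
        Measurable φ ∧ Set.InjOn φ X' ∧
        (∀ g : G, ∀ x ∈ X', (φ (a g x)).1 = fun n h => (φ x).1 n (h * g)) ∧
        Measure.map φ μ = ν :=
  lipSeq_model_universal_general hd X μ a hid hmul hameas hpres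
end
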